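/- arXiv:2108.05066 — 6 statements merged into one kernel-verified Lean document; each statement's English description precedes it below -/
import Mathlib

section
/- For any essentially bounded real random variable X with quantile function F_X^{-1} and U uniformly distributed on (0,1), the random variable Y = (F_X^{-1}(U) + F_X^{-1}(1-U))/2 satisfies ess-sup Y - ess-inf Y ≤ (ess-sup X - ess-inf X)/2. -/
/-!
The quantile function `F⁻¹ = VaR μ X` is nondecreasing on `(0, 1)` with values in
`[ess inf X, ess sup X]`. Hence, with `m = F⁻¹(1/2)`, whichever of `U` and `1 - U` is at most
`1/2` contributes at most `m` and the other at most `ess sup X`, so `2 Y ≤ m + ess sup X`;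
symmetrically `ess inf X + m ≤ 2 Y`. Subtracting the two bounds, the median cancels.
-/

open MeasureTheory ProbabilityTheory Filter
open scoped Classical

variable {Ω : Type*} [MeasurableSpace Ω]

/-- Left `s`-quantile (Value-at-Risk) of `X` under `μ`. -/
noncomputable def VaR (μ : Measure Ω) (X : Ω → ℝ) (s : ℝ) : ℝ :=
  sInf {x : ℝ | s ≤ (μ {ω | X ω ≤ x}).toReal}

/-- Expected Shortfall at level `p`. -/
noncomputable def ES (μ : Measure Ω) (X : Ω → ℝ) (p : ℝ) : ℝ :=
  (1 - p)⁻¹ * ∫ s in Set.Ioo p 1, VaR μ X s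

/-- `A` is a tail event of `X`. -/
def IsTailEvent (μ : Measure Ω) (X : Ω → ℝ) (A : Set Ω) : Prop :=
  MeasurableSet A ∧ 0 < μ A ∧ μ A < 1 ∧
    ∀ᵐ ω ∂μ.restrict A, ∀ᵐ ω' ∂μ.restrict Aᶜ, X ω' ≤ X ω

/-- `A` is a `p`-tail event of `X`: a tail event with probability `1 - p`. -/
def IsPTailEvent (μ : Measure Ω) (p : ℝ) (X : Ω → ℝ) (A : Set Ω) : Prop :=
  IsTailEvent μ X A ∧ μ A = ENNReal.ofReal (1 - p)

/-- `(X, Y)` is `p`-concentrated: `X` and `Y` share a common `p`-tail event. -/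
def PConcentrated (μ : Measure Ω) (p : ℝ) (X Y : Ω → ℝ) : Prop :=
  ∃ A, IsPTailEvent μ p X A ∧ IsPTailEvent μ p Y A

open Set

theorem add_apply_one_sub_le_of_monotoneOn {f : ℝ → ℝ} {b u : ℝ}
    (hf : MonotoneOn f (Ioo 0 1)) (hb : ∀ s ∈ Ioo (0 : ℝ) 1, f s ≤ b) (hu : u ∈ Ioo 0 1) :
    f u + f (1 - u) ≤ f (1 / 2) + b := by
  have h1u : 1 - u ∈ Ioo (0 : ℝ) 1 := ⟨by linarith [hu.2], by linarith [hu.1]⟩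
  have hhalf : (1 / 2 : ℝ) ∈ Ioo 0 1 := by norm_num
  rcases le_total u (1 / 2) with h | h
  · linarith [hf hu hhalf h, hb _ h1u]
  · linarith [hf h1u hhalf (by linarith), hb u hu]

theorem le_add_apply_one_sub_of_monotoneOn {f : ℝ → ℝ} {a u : ℝ}
    (hf : MonotoneOn f (Ioo 0 1)) (ha : ∀ s ∈ Ioo (0 : ℝ) 1, a ≤ f s) (hu : u ∈ Ioo 0 1) :
    a + f (1 / 2) ≤ f u + f (1 - u) := by
  have h1u : 1 - u ∈ Ioo (0 : ℝ) 1 := ⟨by linarith [hu.2], by linarith [hu.1]⟩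
  have hhalf : (1 / 2 : ℝ) ∈ Ioo 0 1 := by norm_num
  rcases le_total u (1 / 2) with h | h
  · linarith [hf hhalf h1u (by linarith), ha u hu]
  · linarith [hf hhalf hu h, ha _ h1u]

theorem MeasureTheory.MemLp.isBoundedUnder_abs {α : Type*} {m : MeasurableSpace α}
    {μ : Measure α} {f : α → ℝ} (hf : MemLp f ⊤ μ) :
    IsBoundedUnder (· ≤ ·) (ae μ) fun x => |f x| :=
  isBoundedUnder_of_eventually_le (ae_le_lpNorm_exponent_top hf)

section VaR

variable {μ : Measure Ω} {X : Ω → ℝ} {a b s : ℝ}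

theorem mem_lowerBounds_setOf_le_measure_le_of_ae_le (ha : ∀ᵐ ω ∂μ, a ≤ X ω)
    (hs : 0 < s) :
    a ∈ lowerBounds {x : ℝ | s ≤ (μ {ω | X ω ≤ x}).toReal} := by
  intro x hx
  by_contra! hxa
  have hnull : μ {ω | X ω ≤ x} = 0 :=
    measure_mono_null (fun ω hω hω' => (hxa.trans_le hω').not_ge hω) ha
  exact hs.not_ge (by simpa [hnull] using hx)

variable [IsProbabilityMeasure μ]

theorem mem_setOf_le_measure_le_of_ae_le (hb : ∀ᵐ ω ∂μ, X ω ≤ b) (hs : s ≤ 1) :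
    b ∈ {x : ℝ | s ≤ (μ {ω | X ω ≤ x}).toReal} := by
  simpa [measure_congr (eventuallyEq_univ.2 hb)] using hs

theorem VaR_le_of_ae_le (ha : ∀ᵐ ω ∂μ, a ≤ X ω) (hb : ∀ᵐ ω ∂μ, X ω ≤ b)
    (hs : s ∈ Ioo 0 1) :
    VaR μ X s ≤ b :=
  csInf_le ⟨a, mem_lowerBounds_setOf_le_measure_le_of_ae_le ha hs.1⟩
    (mem_setOf_le_measure_le_of_ae_le hb hs.2.le)

theorem le_VaR_of_ae_le (ha : ∀ᵐ ω ∂μ, a ≤ X ω) (hb : ∀ᵐ ω ∂μ, X ω ≤ b)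
    (hs : s ∈ Ioo 0 1) :
    a ≤ VaR μ X s :=
  le_csInf ⟨b, mem_setOf_le_measure_le_of_ae_le hb hs.2.le⟩
    (mem_lowerBounds_setOf_le_measure_le_of_ae_le ha hs.1)

theorem monotoneOn_VaR_of_ae_le (ha : ∀ᵐ ω ∂μ, a ≤ X ω) (hb : ∀ᵐ ω ∂μ, X ω ≤ b) :
    MonotoneOn (VaR μ X) (Ioo 0 1) := fun _ hs _ ht hst =>
  csInf_le_csInf ⟨a, mem_lowerBounds_setOf_le_measure_le_of_ae_le ha hs.1⟩
    ⟨b, mem_setOf_le_measure_le_of_ae_le hb ht.2.le⟩ fun _ hx => hst.trans hx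

end VaR

/-- For bounded `X` and `U` uniform on `(0,1)`,
`Y = (F_X⁻¹(U) + F_X⁻¹(1-U))/2` satisfies `L(Y) ≤ L(X)/2`. -/
theorem stmt0 (μ : Measure Ω) [IsProbabilityMeasure μ]
    (X U : Ω → ℝ) (hX : MemLp X ⊤ μ) (hU : Measurable U)
    (hUd : μ.map U = volume.restrict (Set.Ioo 0 1))
    (Y : Ω → ℝ) (hY : Y = fun ω => (VaR μ X (U ω) + VaR μ X (1 - U ω)) / 2) :
    essSup Y μ - essInf Y μ ≤ (essSup X μ - essInf X μ) / 2 := by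
  obtain ⟨hXle, hXge⟩ := isBoundedUnder_le_abs.1 hX.isBoundedUnder_abs
  have ha := ae_essInf_le hXge
  have hb := ae_le_essSup hXle
  have hmono := monotoneOn_VaR_of_ae_le ha hb
  have hUmem : ∀ᵐ ω ∂μ, U ω ∈ Ioo 0 1 :=
    ae_of_ae_map hU.aemeasurable (hUd ▸ ae_restrict_mem measurableSet_Ioo)
  have hYle : ∀ᵐ ω ∂μ, Y ω ≤ (VaR μ X (1 / 2) + essSup X μ) / 2 := by
    filter_upwards [hUmem] with ω hω
    rw [hY]
    linarith [add_apply_one_sub_le_of_monotoneOn hmono (fun _ => VaR_le_of_ae_le ha hb) hω]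
  have hYge : ∀ᵐ ω ∂μ, (essInf X μ + VaR μ X (1 / 2)) / 2 ≤ Y ω := by
    filter_upwards [hUmem] with ω hω
    rw [hY]
    linarith [le_add_apply_one_sub_of_monotoneOn hmono (fun _ => le_VaR_of_ae_le ha hb) hω]
  have hsup := essSup_le_of_ae_le _ hYle (isCoboundedUnder_le_of_eventually_le _ hYge)
  have hinf := le_essInf_of_ae_le _ hYge (isCoboundedUnder_ge_of_eventually_le _ hYle)
  linarith
end

section
/- For X, Y ∈ L^1 sharing a common p-tail event A (i.e., (X,Y) is p-concentrated), ES_p(X+Y) = ES_p(X) + ES_p(Y). -/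
/-! Let `F` be the distribution function of `X`. For `s ∈ (0, 1)` we have `VaR_s(X) ≤ x ↔ s ≤ F x`,
so under the uniform law on `(p, 1)` the variable `s ↦ VaR_s(X)` has distribution function
`(F - p)⁺`. If `A` is a `p`-tail event of `X`, then for every level `x` either `A` misses
`{X ≤ x}` (up to a null set) or `Aᶜ` lies in it, so `μ (A ∩ {X ≤ x}) = (F x - p)⁺` as well.
Hence `∫_p^1 VaR_s(X) ds = E[X; A]`, which is additive in `X` on the variables sharing the tail
event `A`; a common tail event of `X` and `Y` is one of `X + Y`. -/

open MeasureTheory ProbabilityTheory Filter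
open scoped Classical

variable {Ω : Type*} [MeasurableSpace Ω]

open Set Topology

lemma StieltjesFunction.sInf_le_iff (f : StieltjesFunction ℝ) {s : ℝ}
    (hne : {x | s ≤ f x}.Nonempty) (hbdd : BddBelow {x | s ≤ f x}) (x : ℝ) :
    sInf {x | s ≤ f x} ≤ x ↔ s ≤ f x := by
  refine ⟨fun h => le_trans ?_ (f.mono h), fun h => csInf_le hbdd h⟩
  -- right continuity: `f` is at least `s` just to the right of the infimum
  refine ge_of_tendsto ((f.right_continuous _).mono Ioi_subset_Ici_self) ?_
  filter_upwards [self_mem_nhdsWithin] with y hy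
  obtain ⟨z, hz, hzy⟩ := exists_lt_of_csInf_lt hne hy
  exact hz.trans (f.mono hzy.le)

lemma sInf_le_iff_le_cdf (ν : Measure ℝ) [IsProbabilityMeasure ν] {s : ℝ} (hs : s ∈ Ioo 0 1)
    (x : ℝ) : sInf {x | s ≤ cdf ν x} ≤ x ↔ s ≤ cdf ν x := by
  refine (cdf ν).sInf_le_iff ?_ ?_ x
  · exact ((tendsto_cdf_atTop ν).eventually (eventually_ge_nhds hs.2)).exists
  · obtain ⟨b, hb⟩ :=
      eventually_atBot.1 ((tendsto_cdf_atBot ν).eventually (eventually_lt_nhds hs.1))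
    exact ⟨b, fun y hy => le_of_not_gt fun hyb => (hb y hyb.le).not_ge hy⟩

section VaR

variable {μ : Measure Ω} [IsProbabilityMeasure μ] {X : Ω → ℝ} {p : ℝ}

lemma cdf_map_eq_toReal (hX : AEMeasurable X μ) (x : ℝ) :
    cdf (μ.map X) x = (μ {ω | X ω ≤ x}).toReal := by
  have := Measure.isProbabilityMeasure_map hX
  rw [cdf_eq_real, measureReal_def, Measure.map_apply_of_aemeasurable hX measurableSet_Iic]
  rfl

lemma VaR_le_iff (hX : AEMeasurable X μ) {s : ℝ} (hs : s ∈ Ioo 0 1) (x : ℝ) :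
    VaR μ X s ≤ x ↔ s ≤ cdf (μ.map X) x := by
  have := Measure.isProbabilityMeasure_map hX
  simpa only [VaR, ← cdf_map_eq_toReal hX] using sInf_le_iff_le_cdf (μ.map X) hs x

lemma monotoneOn_VaR (hX : AEMeasurable X μ) : MonotoneOn (VaR μ X) (Ioo 0 1) := by
  intro s hs t ht hst
  exact (VaR_le_iff hX hs _).2 (hst.trans ((VaR_le_iff hX ht _).1 le_rfl))

lemma volume_Ioo_inter_Iic {p a b : ℝ} (hab : a ≤ b) :
    volume (Ioo p b ∩ Iic a) = ENNReal.ofReal (a - p) := by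
  refine le_antisymm ?_ ?_
  · calc volume (Ioo p b ∩ Iic a) ≤ volume (Ioc p a) :=
          measure_mono fun s hs => ⟨hs.1.1, hs.2⟩
      _ = ENNReal.ofReal (a - p) := Real.volume_Ioc
  · calc ENNReal.ofReal (a - p) = volume (Ioo p a) := Real.volume_Ioo.symm
      _ ≤ volume (Ioo p b ∩ Iic a) :=
          measure_mono fun s hs => ⟨⟨hs.1, hs.2.trans_le hab⟩, hs.2.le⟩

lemma aemeasurable_VaR_restrict_Ioo (hX : AEMeasurable X μ) (hp : 0 ≤ p) :
    AEMeasurable (VaR μ X) (volume.restrict (Ioo p 1)) :=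
  aemeasurable_restrict_of_monotoneOn measurableSet_Ioo
    ((monotoneOn_VaR hX).mono (Ioo_subset_Ioo_left hp))

lemma map_VaR_restrict_Ioo_Iic (hX : AEMeasurable X μ) (hp : 0 ≤ p) (x : ℝ) :
    (volume.restrict (Ioo p 1)).map (VaR μ X) (Iic x) =
      ENNReal.ofReal (cdf (μ.map X) x - p) := by
  have hset : VaR μ X ⁻¹' Iic x ∩ Ioo p 1 = Ioo p 1 ∩ Iic (cdf (μ.map X) x) := by
    ext s
    simp only [mem_inter_iff, mem_preimage, mem_Iic]
    rw [and_comm]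
    exact and_congr_right fun hs => VaR_le_iff hX ⟨hp.trans_lt hs.1, hs.2⟩ x
  have := Measure.isProbabilityMeasure_map hX
  rw [Measure.map_apply_of_aemeasurable (aemeasurable_VaR_restrict_Ioo hX hp)
      measurableSet_Iic,
    Measure.restrict_apply' measurableSet_Ioo, hset, volume_Ioo_inter_Iic (cdf_le_one _ x)]

end VaR

section TailEvent

variable {μ : Measure Ω} {X Y : Ω → ℝ} {p : ℝ} {A : Set Ω}

lemma IsTailEvent.add (hX : IsTailEvent μ X A) (hY : IsTailEvent μ Y A) :
    IsTailEvent μ (X + Y) A := by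
  refine ⟨hX.1, hX.2.1, hX.2.2.1, ?_⟩
  filter_upwards [hX.2.2.2, hY.2.2.2] with ω hXω hYω
  filter_upwards [hXω, hYω] with ω' hXω' hYω'
  exact add_le_add hXω' hYω'

lemma IsPTailEvent.add (hX : IsPTailEvent μ p X A) (hY : IsPTailEvent μ p Y A) :
    IsPTailEvent μ p (X + Y) A :=
  ⟨hX.1.add hY.1, hX.2⟩

lemma IsTailEvent.measure_inter_eq_zero_or (hA : IsTailEvent μ X A) (x : ℝ) :
    μ (A ∩ {ω | X ω ≤ x}) = 0 ∨ μ (Aᶜ ∩ {ω | X ω ≤ x}) = μ Aᶜ := by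
  obtain ⟨hAm, -, -, htail⟩ := hA
  refine or_iff_not_imp_left.2 fun h => ?_
  rw [inter_comm, ← Measure.restrict_apply' hAm] at h
  obtain ⟨ω, hωx, hω⟩ := Measure.exists_mem_of_measure_ne_zero_of_ae h (ae_restrict_of_ae htail)
  have hsub : ∀ᵐ ω' ∂μ.restrict Aᶜ, X ω' ≤ x := hω.mono fun ω' h => h.trans hωx
  rw [inter_comm, ← Measure.restrict_apply' hAm.compl, ← Measure.restrict_apply_univ (μ := μ) Aᶜ]
  exact measure_congr (eventuallyEq_univ.2 hsub)

end TailEvent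

namespace IsPTailEvent

variable {μ : Measure Ω} {X : Ω → ℝ} {p : ℝ} {A : Set Ω}

lemma mem_Ioo (hA : IsPTailEvent μ p X A) : p ∈ Ioo 0 1 := by
  obtain ⟨⟨-, hA0, hA1, -⟩, hμA⟩ := hA
  rw [hμA, ENNReal.ofReal_pos] at hA0
  rw [hμA, ENNReal.ofReal_lt_one] at hA1
  constructor <;> linarith

variable [IsProbabilityMeasure μ]

lemma measure_compl (hA : IsPTailEvent μ p X A) : μ Aᶜ = ENNReal.ofReal p := by
  rw [prob_compl_eq_one_sub hA.1.1, hA.2, ← ENNReal.ofReal_one,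
    ← ENNReal.ofReal_sub _ (sub_nonneg.2 hA.mem_Ioo.2.le), sub_sub_cancel]

lemma measure_inter_le (hA : IsPTailEvent μ p X A) (hX : AEMeasurable X μ) (x : ℝ) :
    μ (A ∩ {ω | X ω ≤ x}) = ENNReal.ofReal (cdf (μ.map X) x - p) := by
  have hsplit : μ {ω | X ω ≤ x} = μ (A ∩ {ω | X ω ≤ x}) + μ (Aᶜ ∩ {ω | X ω ≤ x}) := by
    rw [← measure_inter_add_sdiff _ hA.1.1, sdiff_eq, inter_comm, inter_comm _ Aᶜ]
  rw [cdf_map_eq_toReal hX, hsplit]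
  rcases hA.1.measure_inter_eq_zero_or x with h | h
  · have hle : μ (Aᶜ ∩ {ω | X ω ≤ x}) ≤ ENNReal.ofReal p :=
      hA.measure_compl ▸ measure_mono inter_subset_left
    rw [h, zero_add, eq_comm, ENNReal.ofReal_eq_zero, sub_nonpos]
    exact ENNReal.toReal_le_of_le_ofReal hA.mem_Ioo.1.le hle
  · rw [h, hA.measure_compl, ENNReal.toReal_add (measure_ne_top _ _) ENNReal.ofReal_ne_top,
      ENNReal.toReal_ofReal hA.mem_Ioo.1.le, add_sub_cancel_right,
      ENNReal.ofReal_toReal (measure_ne_top _ _)]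

lemma map_VaR_eq (hA : IsPTailEvent μ p X A) (hX : AEMeasurable X μ) :
    (volume.restrict (Ioo p 1)).map (VaR μ X) = (μ.restrict A).map X := by
  refine (Measure.ext_of_Iic _ _ fun x => ?_).symm
  rw [map_VaR_restrict_Ioo_Iic hX hA.mem_Ioo.1.le, ← hA.measure_inter_le hX,
    Measure.map_apply_of_aemeasurable hX.restrict measurableSet_Iic,
    Measure.restrict_apply' hA.1.1, inter_comm]
  rfl

lemma setIntegral_VaR (hA : IsPTailEvent μ p X A) (hX : AEMeasurable X μ) :
    ∫ s in Ioo p 1, VaR μ X s = ∫ ω in A, X ω ∂μ := by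
  calc ∫ s in Ioo p 1, VaR μ X s = ∫ y, y ∂(volume.restrict (Ioo p 1)).map (VaR μ X) :=
        (integral_map (aemeasurable_VaR_restrict_Ioo hX hA.mem_Ioo.1.le)
          aestronglyMeasurable_id).symm
    _ = ∫ y, y ∂(μ.restrict A).map X := by rw [hA.map_VaR_eq hX]
    _ = ∫ ω in A, X ω ∂μ := integral_map hX.restrict aestronglyMeasurable_id

end IsPTailEvent

theorem stmt4_general (μ : Measure Ω) [IsProbabilityMeasure μ] (p : ℝ)
    (X Y : Ω → ℝ) (hX : Integrable X μ) (hY : Integrable Y μ)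
    (A : Set Ω) (hAX : IsPTailEvent μ p X A) (hAY : IsPTailEvent μ p Y A) :
    ES μ (X + Y) p = ES μ X p + ES μ Y p := by
  rw [ES, ES, ES, (hAX.add hAY).setIntegral_VaR (hX.add hY).aemeasurable,
    hAX.setIntegral_VaR hX.aemeasurable, hAY.setIntegral_VaR hY.aemeasurable, Pi.add_def,
    integral_add hX.integrableOn hY.integrableOn, mul_add]

/-- `ES_p` is additive on `p`-concentrated pairs. -/
theorem stmt4 (μ : Measure Ω) [IsProbabilityMeasure μ] (p : ℝ) (hp : p ∈ Set.Ioo (0:ℝ) 1)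
    (X Y : Ω → ℝ) (hX : Integrable X μ) (hY : Integrable Y μ)
    (A : Set Ω) (hAX : IsPTailEvent μ p X A) (hAY : IsPTailEvent μ p Y A) :
    ES μ (X + Y) p = ES μ X p + ES μ Y p :=
  stmt4_general μ p X Y hX hY A hAX hAY
end

section
/- Let p ∈ (0,1) and let g : [0,∞) → ℝ be increasing with g(0) = 0 and satisfying |g(x)-g(y)| ≤ |x-y| for all x,y ≥ 0. Then the functional ρ(X) = g(ES_p(X) - E[X]) + E[X] on L^∞ is monotone: X ≤ Y almost surely implies ρ(X) ≤ ρ(Y). -/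
open MeasureTheory ProbabilityTheory Filter
open scoped Classical

variable {Ω : Type*} [MeasurableSpace Ω]

/-!
`VaR_s(X)` is the quantile function of the law of `X` at `s`. Evaluated at a uniform variable on
`(0,1)` it has the law of `X`, so `E[X] = ∫₀¹ VaR_s(X) ds`; as `VaR_s(X)` increases in `s`, its
average over the upper tail `(p,1)` dominates its average over `(0,1)`: `E[X] ≤ ES_p(X)`.
Pointwise comparison of quantiles makes `ES_p` monotone. So `g` is only evaluated on `[0,∞)`, at
the gaps `a = ES_p(X) - E[X]` and `b = ES_p(Y) - E[Y]`. If `a ≤ b`, monotonicity of `g` suffices;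
otherwise `g` drops by at most `a - b ≤ E[Y] - E[X]`, which the growth of the mean makes up for.
-/

open Set Topology

-- Only meaningful for `s ∈ (0,1)`: otherwise the set is unbounded below or empty.
noncomputable def quantile (ν : Measure ℝ) (s : ℝ) : ℝ :=
  sInf {x | s ≤ cdf ν x}

section Quantile

variable {ν : Measure ℝ} {s t : ℝ}

lemma bddBelow_setOf_le_cdf (hs : 0 < s) : BddBelow {x | s ≤ cdf ν x} := by
  obtain ⟨a, ha⟩ := eventually_atBot.1 ((tendsto_cdf_atBot ν).eventually (gt_mem_nhds hs))
  exact ⟨a, fun x hx => le_of_not_ge fun hxa => (ha x hxa).not_ge hx⟩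

lemma nonempty_setOf_le_cdf (hs : s < 1) : {x | s ≤ cdf ν x}.Nonempty :=
  ((tendsto_cdf_atTop ν).eventually (lt_mem_nhds hs)).exists.imp fun _ hx => hx.le

lemma le_cdf_quantile (hs : s ∈ Ioo 0 1) : s ≤ cdf ν (quantile ν s) := by
  have hright : Tendsto (cdf ν) (𝓝[>] quantile ν s) (𝓝 (cdf ν (quantile ν s))) :=
    ((cdf ν).right_continuous _).mono Ioi_subset_Ici_self
  refine ge_of_tendsto hright (eventually_nhdsWithin_of_forall fun x hx => ?_)
  obtain ⟨y, hy, hyx⟩ := exists_lt_of_csInf_lt (nonempty_setOf_le_cdf hs.2) hx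
  exact hy.trans (monotone_cdf ν hyx.le)

lemma quantile_le_iff (hs : s ∈ Ioo 0 1) : quantile ν s ≤ t ↔ s ≤ cdf ν t :=
  ⟨fun h => (le_cdf_quantile hs).trans (monotone_cdf ν h),
    fun h => csInf_le (bddBelow_setOf_le_cdf hs.1) h⟩

lemma monotoneOn_quantile : MonotoneOn (quantile ν) (Ioo 0 1) := fun _ hs _ hs' hss' =>
  (quantile_le_iff hs).2 (hss'.trans (le_cdf_quantile hs'))

lemma quantile_le_quantile {ν' : Measure ℝ}
    (h : ∀ x, cdf ν' x ≤ cdf ν x) (hs : s ∈ Ioo 0 1) : quantile ν s ≤ quantile ν' s :=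
  (quantile_le_iff hs).2 ((le_cdf_quantile hs).trans (h _))

lemma aemeasurable_quantile : AEMeasurable (quantile ν) (volume.restrict (Ioo 0 1)) :=
  aemeasurable_restrict_of_monotoneOn measurableSet_Ioo monotoneOn_quantile

variable [IsProbabilityMeasure ν]

lemma map_quantile : (volume.restrict (Ioo 0 1)).map (quantile ν) = ν := by
  refine (Measure.ext_of_Iic ν _ fun t => ?_).symm
  have hpre : quantile ν ⁻¹' Iic t =ᵐ[volume.restrict (Ioo 0 1)] Iic (cdf ν t) := by
    filter_upwards [ae_restrict_mem measurableSet_Ioo] with s hs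
    exact propext (quantile_le_iff hs)
  rw [Measure.map_apply_of_aemeasurable aemeasurable_quantile measurableSet_Iic, measure_congr hpre,
    Measure.restrict_congr_set Ioo_ae_eq_Ioc, Measure.restrict_apply measurableSet_Iic,
    Iic_inter_Ioc_of_le (cdf_le_one ν t), Real.volume_Ioc, sub_zero, ofReal_cdf]

lemma integrableOn_quantile (h : Integrable id ν) : IntegrableOn (quantile ν) (Ioo 0 1) := by
  rw [← map_quantile (ν := ν)] at h
  exact (integrable_map_measure aestronglyMeasurable_id aemeasurable_quantile).1 h

lemma setIntegral_quantile : ∫ s in Ioo 0 1, quantile ν s = ∫ x, x ∂ν := by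
  conv_rhs => rw [← map_quantile (ν := ν)]
  rw [integral_map (f := fun x => x) aemeasurable_quantile aestronglyMeasurable_id]

end Quantile

lemma setIntegral_Ioo_le_of_monotoneOn {f : ℝ → ℝ} (hf : MonotoneOn f (Ioo 0 1))
    (hfi : IntegrableOn f (Ioo 0 1)) {p : ℝ} (hp : p ∈ Ioo 0 1) :
    ∫ s in Ioo 0 1, f s ≤ (1 - p)⁻¹ * ∫ s in Ioo p 1, f s := by
  obtain ⟨hp0, hp1⟩ := hp
  have hp' : p ∈ Ioo (0:ℝ) 1 := ⟨hp0, hp1⟩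
  have hIoc : Ioc 0 p ⊆ Ioo (0:ℝ) 1 := fun s hs => ⟨hs.1, hs.2.trans_lt hp1⟩
  have hIoo : Ioo p 1 ⊆ Ioo (0:ℝ) 1 := Ioo_subset_Ioo_left hp0.le
  have hlow : ∫ s in Ioc 0 p, f s ≤ p * f p := by
    have := setIntegral_mono_on (hfi.mono_set hIoc) (integrableOn_const (C := f p) (by simp))
      measurableSet_Ioc fun s hs => hf (hIoc hs) hp' hs.2
    rwa [setIntegral_const, measureReal_def, Real.volume_Ioc, sub_zero,
      ENNReal.toReal_ofReal hp0.le, smul_eq_mul] at this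
  have hhigh : (1 - p) * f p ≤ ∫ s in Ioo p 1, f s := by
    have := setIntegral_mono_on (integrableOn_const (C := f p) (by simp)) (hfi.mono_set hIoo)
      measurableSet_Ioo fun s hs => hf hp' (hIoo hs) hs.1.le
    rwa [setIntegral_const, measureReal_def, Real.volume_Ioo,
      ENNReal.toReal_ofReal (sub_nonneg.2 hp1.le), smul_eq_mul] at this
  rw [← Ioc_union_Ioo_eq_Ioo hp0.le hp1,
    setIntegral_union (disjoint_left.2 fun _ hs hs' => hs'.1.not_ge hs.2) measurableSet_Ioo
      (hfi.mono_set hIoc) (hfi.mono_set hIoo),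
    le_inv_mul_iff₀ (sub_pos.2 hp1)]
  -- `(1 - p) ∫_{(0,p]} f ≤ (1 - p) p f(p) ≤ p ∫_{(p,1)} f`
  nlinarith [mul_le_mul_of_nonneg_left hlow (sub_nonneg.2 hp1.le),
    mul_le_mul_of_nonneg_left hhigh hp0.le]

section ExpectedShortfall

variable {μ : Measure Ω} [IsProbabilityMeasure μ] {X Y : Ω → ℝ} {p : ℝ}

lemma VaR_eq_quantile_map (hX : AEMeasurable X μ) : VaR μ X = quantile (μ.map X) := by
  have := Measure.isProbabilityMeasure_map hX
  ext s
  simp only [VaR, quantile, cdf_eq_real, measureReal_def,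
    Measure.map_apply_of_aemeasurable hX measurableSet_Iic]
  rfl

lemma cdf_map_le_cdf_map (hX : AEMeasurable X μ) (hY : AEMeasurable Y μ)
    (hXY : ∀ᵐ ω ∂μ, X ω ≤ Y ω) (x : ℝ) : cdf (μ.map Y) x ≤ cdf (μ.map X) x := by
  have := Measure.isProbabilityMeasure_map hX
  have := Measure.isProbabilityMeasure_map hY
  rw [cdf_eq_real, cdf_eq_real, map_measureReal_apply_of_aemeasurable hY measurableSet_Iic,
    map_measureReal_apply_of_aemeasurable hX measurableSet_Iic]
  refine ENNReal.toReal_mono (measure_ne_top _ _) (measure_mono_ae ?_)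
  filter_upwards [hXY] with ω hXYω hYω
  exact hXYω.trans hYω

lemma integrableOn_quantile_map (hX : Integrable X μ) :
    IntegrableOn (quantile (μ.map X)) (Ioo 0 1) := by
  have := Measure.isProbabilityMeasure_map hX.aemeasurable
  exact integrableOn_quantile
    ((integrable_map_measure aestronglyMeasurable_id hX.aemeasurable).2 hX)

lemma integral_le_ES (hX : Integrable X μ) (hp : p ∈ Ioo 0 1) :
    ∫ ω, X ω ∂μ ≤ ES μ X p := by
  have := Measure.isProbabilityMeasure_map hX.aemeasurable
  rw [ES, VaR_eq_quantile_map hX.aemeasurable,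
    ← integral_map (f := fun x => x) hX.aemeasurable aestronglyMeasurable_id,
    ← setIntegral_quantile]
  exact setIntegral_Ioo_le_of_monotoneOn monotoneOn_quantile (integrableOn_quantile_map hX) hp

lemma ES_mono (hX : Integrable X μ) (hY : Integrable Y μ) (hXY : ∀ᵐ ω ∂μ, X ω ≤ Y ω)
    (hp : p ∈ Ioo 0 1) : ES μ X p ≤ ES μ Y p := by
  have := Measure.isProbabilityMeasure_map hX.aemeasurable
  have := Measure.isProbabilityMeasure_map hY.aemeasurable
  have htail {Z : Ω → ℝ} (hZ : Integrable Z μ) : IntegrableOn (quantile (μ.map Z)) (Ioo p 1) :=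
    (integrableOn_quantile_map hZ).mono_set (Ioo_subset_Ioo_left hp.1.le)
  rw [ES, ES, VaR_eq_quantile_map hX.aemeasurable, VaR_eq_quantile_map hY.aemeasurable]
  refine mul_le_mul_of_nonneg_left (setIntegral_mono_on (htail hX) (htail hY) measurableSet_Ioo
    fun s hs => ?_) (inv_nonneg.2 (sub_nonneg.2 hp.2.le))
  exact quantile_le_quantile (cdf_map_le_cdf_map hX.aemeasurable hY.aemeasurable hXY)
    ⟨hp.1.trans hs.1, hs.2⟩

end ExpectedShortfall

lemma add_le_add_of_monotoneOn_of_abs_sub_le {g : ℝ → ℝ} (hg_mono : MonotoneOn g (Ici 0))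
    (hg_lip : ∀ x ∈ Ici (0:ℝ), ∀ y ∈ Ici (0:ℝ), |g x - g y| ≤ |x - y|) {a b u v : ℝ}
    (ha : 0 ≤ a) (hb : 0 ≤ b) (huv : u ≤ v) (h : a + u ≤ b + v) : g a + u ≤ g b + v := by
  rcases le_total a b with hab | hba
  · linarith [hg_mono ha hb hab]
  · linarith [le_abs_self (g a - g b), hg_lip a ha b hb, abs_of_nonneg (sub_nonneg.2 hba)]

theorem stmt5_general (μ : Measure Ω) [IsProbabilityMeasure μ] (p : ℝ) (hp : p ∈ Set.Ioo (0:ℝ) 1)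
    (g : ℝ → ℝ) (hg_mono : MonotoneOn g (Set.Ici 0))
    (hg_lip : ∀ x ∈ Set.Ici (0:ℝ), ∀ y ∈ Set.Ici (0:ℝ), |g x - g y| ≤ |x - y|)
    (X Y : Ω → ℝ) (hX : MemLp X ⊤ μ) (hY : MemLp Y ⊤ μ)
    (hXY : ∀ᵐ ω ∂μ, X ω ≤ Y ω) :
    g (ES μ X p - ∫ ω, X ω ∂μ) + ∫ ω, X ω ∂μ ≤
      g (ES μ Y p - ∫ ω, Y ω ∂μ) + ∫ ω, Y ω ∂μ := by
  have hXint := hX.integrable le_top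
  have hYint := hY.integrable le_top
  refine add_le_add_of_monotoneOn_of_abs_sub_le hg_mono hg_lip
    (sub_nonneg.2 (integral_le_ES hXint hp)) (sub_nonneg.2 (integral_le_ES hYint hp))
    (integral_mono_ae hXint hYint hXY) ?_
  simpa only [sub_add_cancel] using ES_mono hXint hYint hXY hp

/-- `ρ(X) = g(ES_p(X) - E[X]) + E[X]` is monotone. -/
theorem stmt5 (μ : Measure Ω) [IsProbabilityMeasure μ] (p : ℝ) (hp : p ∈ Set.Ioo (0:ℝ) 1)
    (g : ℝ → ℝ) (hg_mono : MonotoneOn g (Set.Ici 0)) (hg0 : g 0 = 0)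
    (hg_lip : ∀ x ∈ Set.Ici (0:ℝ), ∀ y ∈ Set.Ici (0:ℝ), |g x - g y| ≤ |x - y|)
    (X Y : Ω → ℝ) (hX : MemLp X ⊤ μ) (hY : MemLp Y ⊤ μ)
    (hXY : ∀ᵐ ω ∂μ, X ω ≤ Y ω) :
    g (ES μ X p - ∫ ω, X ω ∂μ) + ∫ ω, X ω ∂μ ≤
      g (ES μ Y p - ∫ ω, Y ω ∂μ) + ∫ ω, Y ω ∂μ :=
  stmt5_general μ p hp g hg_mono hg_lip X Y hX hY hXY
end

section
/- Let C be a bivariate copula, (U,V) ~ C and (U',V') ~ C independent of (U,V), and define A = {U > U', V < V'} ∪ {U < U', V > V'} and Ṽ = V·1_{A^c} + V'·1_A. Then Ṽ is uniformly distributed on [0,1]. -/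
open MeasureTheory ProbabilityTheory Filter
open scoped Classical

variable {Ω : Type*} [MeasurableSpace Ω]

/-! Discordance of the two copies, and the joint law of the copies, are both invariant under
exchanging them. Hence `V'` and `V` have the same law restricted to the discordant set `A`,
while off `A` the variable `Ṽ` is `V` itself; adding the two pieces gives
the law of `V`. -/

namespace MeasureTheory.Measure

variable {α : Type*} [MeasurableSpace α]

theorem map_swap_restrict_eq_of_preimage_swap_eq {ν : Measure (α × α)} (hν : ν.map Prod.swap = ν)
    {S : Set (α × α)} (hS : MeasurableSet S) (hSsymm : Prod.swap ⁻¹' S = S) :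
    (ν.restrict S).map Prod.swap = ν.restrict S := by
  conv_rhs => rw [← hν, restrict_map measurable_swap hS, hSsymm]

theorem map_ite_mem_eq_map_fst {ν : Measure (α × α)} {S : Set (α × α)} (hS : MeasurableSet S)
    (hν : (ν.restrict S).map Prod.swap = ν.restrict S) :
    ν.map (fun p => if p ∈ S then p.2 else p.1) = ν.map Prod.fst := by
  have hσ : Measurable fun p : α × α => if p ∈ S then p.2 else p.1 :=
    measurable_snd.ite hS measurable_fst
  have on_S : (ν.restrict S).map (fun p => if p ∈ S then p.2 else p.1) =
      (ν.restrict S).map Prod.fst :=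
    calc _ = (ν.restrict S).map Prod.snd :=
          map_congr <| (ae_restrict_mem hS).mono fun p hp => if_pos hp
      _ = ((ν.restrict S).map Prod.swap).map Prod.fst := by
          rw [map_map measurable_fst measurable_swap]; rfl
      _ = _ := by rw [hν]
  have on_Sc : (ν.restrict Sᶜ).map (fun p => if p ∈ S then p.2 else p.1) =
      (ν.restrict Sᶜ).map Prod.fst :=
    map_congr <| (ae_restrict_mem hS.compl).mono fun p hp => if_neg hp
  conv_lhs => rw [← restrict_add_restrict_compl (μ := ν) hS]
  rw [Measure.map_add _ _ hσ, on_S, on_Sc, ← Measure.map_add _ _ measurable_fst,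
    restrict_add_restrict_compl hS]

end MeasureTheory.Measure

namespace ProbabilityTheory

theorem IndepFun.map_swap_map_prodMk_eq {Ω β : Type*} [MeasurableSpace Ω] [MeasurableSpace β]
    {μ : Measure Ω} [IsFiniteMeasure μ] {X Y : Ω → β} (hX : Measurable X) (hY : Measurable Y)
    (hindep : IndepFun X Y μ) (hid : IdentDistrib X Y μ μ) :
    (μ.map fun ω => (X ω, Y ω)).map Prod.swap = μ.map fun ω => (X ω, Y ω) := by
  rw [(indepFun_iff_map_prod_eq_prod_map_map hX.aemeasurable hY.aemeasurable).1 hindep,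
    Measure.prod_swap, hid.map_eq]

end ProbabilityTheory

def discordantPairs : Set ((ℝ × ℝ) × (ℝ × ℝ)) := {p | (p.1.1 - p.2.1) * (p.1.2 - p.2.2) < 0}

theorem measurableSet_discordantPairs : MeasurableSet discordantPairs :=
  measurableSet_lt (by fun_prop) measurable_const

theorem preimage_swap_discordantPairs : Prod.swap ⁻¹' discordantPairs = discordantPairs := by
  ext p
  simp only [discordantPairs, Set.mem_preimage, Set.mem_ofPred_eq, Prod.fst_swap, Prod.snd_swap]
  rw [show (p.2.1 - p.1.1) * (p.2.2 - p.1.2) = (p.1.1 - p.2.1) * (p.1.2 - p.2.2) by ring]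

/-- with `(U,V)` and `(U',V')` i.i.d. with copula distribution,
`Ṽ = V 1_{Aᶜ} + V' 1_A` is uniform on `[0,1]`. -/
theorem stmt16 (μ : Measure Ω) [IsProbabilityMeasure μ]
    (U V U' V' : Ω → ℝ)
    (hU : Measurable U) (hV : Measurable V) (hU' : Measurable U') (hV' : Measurable V')
    (hid : IdentDistrib (fun ω => (U ω, V ω)) (fun ω => (U' ω, V' ω)) μ μ)
    (hindep : IndepFun (fun ω => (U ω, V ω)) (fun ω => (U' ω, V' ω)) μ)
    (hVu : μ.map V = volume.restrict (Set.Icc 0 1))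
    (A : Set Ω)
    (hA : A = {ω | (U' ω < U ω ∧ V ω < V' ω) ∨ (U ω < U' ω ∧ V' ω < V ω)}) :
    μ.map (fun ω => if ω ∈ A then V' ω else V ω) = volume.restrict (Set.Icc 0 1) := by
  set W : Ω → (ℝ × ℝ) × (ℝ × ℝ) := fun ω => ((U ω, V ω), (U' ω, V' ω))
  have hW : Measurable W := (hU.prodMk hV).prodMk (hU'.prodMk hV')
  have hA' : A = W ⁻¹' discordantPairs := by
    ext ω
    simp only [hA, discordantPairs, W, Set.mem_preimage, Set.mem_ofPred_eq, mul_neg_iff,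
      sub_pos, sub_neg]
  set σ := fun p : (ℝ × ℝ) × (ℝ × ℝ) => if p ∈ discordantPairs then p.2 else p.1
  have hσ : Measurable σ := measurable_snd.ite measurableSet_discordantPairs measurable_fst
  have hlaw : (μ.map W).map σ = (μ.map W).map Prod.fst :=
    Measure.map_ite_mem_eq_map_fst measurableSet_discordantPairs
      (Measure.map_swap_restrict_eq_of_preimage_swap_eq
        (hindep.map_swap_map_prodMk_eq (hU.prodMk hV) (hU'.prodMk hV') hid)
        measurableSet_discordantPairs preimage_swap_discordantPairs)
  have hsel : (fun ω => if ω ∈ A then V' ω else V ω) = Prod.snd ∘ σ ∘ W := by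
    funext ω
    by_cases h : W ω ∈ discordantPairs <;> simp [hA', σ, h, W]
  rw [hsel, ← hVu, ← Measure.map_map measurable_snd (hσ.comp hW), ← Measure.map_map hσ hW, hlaw,
    Measure.map_map measurable_fst hW, Measure.map_map measurable_snd (measurable_fst.comp hW)]
  rfl
end

section
/- With notation as in the previous construction (C a bivariate copula, (U,V), (U',V') i.i.d. ~ C, A = {U > U', V < V'} ∪ {U < U', V > V'}, Ṽ = V 1_{A^c} + V' 1_A), the joint distribution Ĉ of (U, Ṽ) satisfies Ĉ(u,v) ≥ C(u,v) for all (u,v) ∈ [0,1]^2. -/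
/-!
Off `A` the two events `{U ≤ u, V ≤ v}` and `{U ≤ u, Ṽ ≤ v}` coincide, so it suffices to compare
their differences: the first loses `{U ≤ u, V ≤ v < V', U' < U}` and the second gains
`{U ≤ u, V' ≤ v < V, U < U'}`. Exchanging the two i.i.d. copies maps the first difference onto
`{U' ≤ u, V' ≤ v < V, U < U'}`, which is contained in the second because `U < U' ≤ u`.
-/

open MeasureTheory ProbabilityTheory Filter
open scoped Classical

variable {Ω : Type*} [MeasurableSpace Ω]

theorem ProbabilityTheory.IdentDistrib.prodMk_swap_of_indepFun {β : Type*} [MeasurableSpace β]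
    {μ : Measure Ω} [IsFiniteMeasure μ] {X Y : Ω → β} (hid : IdentDistrib X Y μ μ)
    (hindep : IndepFun X Y μ) :
    IdentDistrib (fun ω ↦ (X ω, Y ω)) (fun ω ↦ (Y ω, X ω)) μ μ where
  aemeasurable_fst := hid.aemeasurable_fst.prodMk hid.aemeasurable_snd
  aemeasurable_snd := hid.aemeasurable_snd.prodMk hid.aemeasurable_fst
  map_eq := by
    rw [(indepFun_iff_map_prod_eq_prod_map_map hid.aemeasurable_fst hid.aemeasurable_snd).1 hindep,
      (indepFun_iff_map_prod_eq_prod_map_map hid.aemeasurable_snd hid.aemeasurable_fst).1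
        hindep.symm, hid.map_eq]

theorem MeasureTheory.measure_le_of_measure_sdiff_le {μ : Measure Ω} {s t : Set Ω}
    (hs : NullMeasurableSet s μ) (h : μ (s \ t) ≤ μ (t \ s)) : μ s ≤ μ t :=
  calc μ s ≤ μ (s ∩ t) + μ (s \ t) := measure_le_inter_add_sdiff μ s t
    _ ≤ μ (t ∩ s) + μ (t \ s) := by rw [Set.inter_comm]; gcongr
    _ = μ t := measure_inter_add_sdiff₀ t hs

theorem stmt17_general (μ : Measure Ω) [IsProbabilityMeasure μ]
    (U V U' V' : Ω → ℝ)
    (hid : IdentDistrib (fun ω => (U ω, V ω)) (fun ω => (U' ω, V' ω)) μ μ)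
    (hindep : IndepFun (fun ω => (U ω, V ω)) (fun ω => (U' ω, V' ω)) μ)
    (A : Set Ω)
    (hA : A = {ω | (U' ω < U ω ∧ V ω < V' ω) ∨ (U ω < U' ω ∧ V' ω < V ω)}) :
    ∀ u v : ℝ, u ∈ Set.Icc (0:ℝ) 1 → v ∈ Set.Icc (0:ℝ) 1 →
      μ {ω | U ω ≤ u ∧ V ω ≤ v} ≤
        μ {ω | U ω ≤ u ∧ (if ω ∈ A then V' ω else V ω) ≤ v} := by
  intro u v _ _
  subst hA
  refine measure_le_of_measure_sdiff_le
    (hid.aemeasurable_fst.nullMeasurableSet_preimage (measurableSet_Iic.prod measurableSet_Iic)) ?_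
  calc _ ≤ μ {ω | U ω ≤ u ∧ V ω ≤ v ∧ v < V' ω ∧ U' ω < U ω} := by
        refine measure_mono fun ω ⟨⟨hu, hv⟩, hnot⟩ ↦ ?_
        simp only [Set.mem_ofPred_eq] at hnot ⊢
        split_ifs at hnot with hωA <;> grind
    _ = μ {ω | U' ω ≤ u ∧ V' ω ≤ v ∧ v < V ω ∧ U ω < U' ω} :=
        (hid.prodMk_swap_of_indepFun hindep).measure_mem_eq
          (s := {p : (ℝ × ℝ) × (ℝ × ℝ) | p.1.1 ≤ u ∧ p.1.2 ≤ v ∧ v < p.2.2 ∧ p.2.1 < p.1.1})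
          (by measurability)
    _ ≤ _ := by
        refine measure_mono fun ω ⟨hu', hv', hv, hlt⟩ ↦ ?_
        have hωA : U ω < U' ω ∧ V' ω < V ω := ⟨hlt, hv'.trans_lt hv⟩
        simp only [Set.mem_sdiff, Set.mem_ofPred_eq, if_pos (Or.inr hωA : _ ∨ _)]
        exact ⟨⟨hlt.le.trans hu', hv'⟩, fun h ↦ h.2.not_gt hv⟩

/-- the joint distribution `Ĉ` of `(U, Ṽ)` dominates `C`
pointwise (concordance order). -/
theorem stmt17 (μ : Measure Ω) [IsProbabilityMeasure μ]
    (U V U' V' : Ω → ℝ)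
    (hU : Measurable U) (hV : Measurable V) (hU' : Measurable U') (hV' : Measurable V')
    (hid : IdentDistrib (fun ω => (U ω, V ω)) (fun ω => (U' ω, V' ω)) μ μ)
    (hindep : IndepFun (fun ω => (U ω, V ω)) (fun ω => (U' ω, V' ω)) μ)
    (hUu : μ.map U = volume.restrict (Set.Icc 0 1))
    (hVu : μ.map V = volume.restrict (Set.Icc 0 1))
    (A : Set Ω)
    (hA : A = {ω | (U' ω < U ω ∧ V ω < V' ω) ∨ (U ω < U' ω ∧ V' ω < V ω)}) :
    ∀ u v : ℝ, u ∈ Set.Icc (0:ℝ) 1 → v ∈ Set.Icc (0:ℝ) 1 →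
      μ {ω | U ω ≤ u ∧ V ω ≤ v} ≤
        μ {ω | U ω ≤ u ∧ (if ω ∈ A then V' ω else V ω) ≤ v} :=
  stmt17_general μ U V U' V' hid hindep A hA
end

section
/- Let p ∈ (0,1/2], a ≥ b ≥ 0, y ∈ ℝ, U uniform on (0,1), X ~ p·δ_{-(1-p)a} + (1-p)·δ_{pa}, Y ~ (1-p)·δ_{-pb+y} + p·δ_{(1-p)b+y}, and set X_1 = X_2 = F_X^{-1}(U), Y_1 = F_Y^{-1}(U), Y_2 = F_Y^{-1}(1-U). Then E[X_1+Y_1] = E[X_2+Y_2] = y, ES_p(X_1+Y_1) = p(a-b) + pb/(1-p) + y, and ES_p(X_2+Y_2) = p(a-b) + y. -/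
open MeasureTheory ProbabilityTheory Filter
open scoped Classical

variable {Ω : Type*} [MeasurableSpace Ω]

/-
Both sums are functions of `U`. The sum `X₁ + Y₁` is `g(U)` for a nondecreasing, left-continuous
step function `g`; the sum `X₁ + Y₂` agrees with such a function of `U` except on `{U = p}`, a null
event, because the two steps of `Y₂ = F_Y⁻¹(1 - U)` are reflected to the same jump point `p` as
those of `X₁`, and `a ≥ b` makes the result nondecreasing. For nondecreasing left-continuous `g`
the `s`-quantile of `g(U)` is `g(s)`, so `ES_p` is the average of `g` over `(p, 1)`, and the means
and Expected Shortfalls are integrals of step functions over intervals.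
-/

open Set

noncomputable def stepAt (t c d : ℝ) (u : ℝ) : ℝ := if u ≤ t then c else d

section StepFunction

variable {t c d : ℝ}

lemma stepAt_monotone (h : c ≤ d) : Monotone (stepAt t c d) := by
  intro u v huv
  unfold stepAt
  split_ifs <;> first | exact le_rfl | exact h | linarith

lemma continuousWithinAt_Iic_stepAt (s : ℝ) : ContinuousWithinAt (stepAt t c d) (Iic s) s := by
  rcases le_or_gt s t with hst | hts
  · exact continuousWithinAt_const.congr (fun u hu => if_pos (le_trans hu hst)) (if_pos hst)
  · refine (continuousAt_const.congr (f := fun _ => d) ?_).continuousWithinAt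
    filter_upwards [lt_mem_nhds hts] with u hu using (if_neg (not_le.mpr hu)).symm

lemma stepAt_add (c' d' u : ℝ) :
    stepAt t c d u + stepAt t c' d' u = stepAt t (c + c') (d + d') u := by
  unfold stepAt
  split_ifs <;> rfl

lemma stepAt_one_sub {u : ℝ} (hu : u ≠ t) : stepAt (1 - t) c d (1 - u) = stepAt t d c u := by
  unfold stepAt
  rcases hu.lt_or_gt with h | h
  · rw [if_neg (by linarith), if_pos h.le]
  · rw [if_pos (by linarith), if_neg (not_le.mpr h)]

lemma integrableOn_stepAt {s : Set ℝ} (hs : volume s ≠ ⊤) : IntegrableOn (stepAt t c d) s := by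
  refine Measure.integrableOn_of_bounded (M := max |c| |d|) hs ?_ (ae_of_all _ fun u => ?_)
  · exact (measurable_const.ite measurableSet_Iic measurable_const).aestronglyMeasurable
  · unfold stepAt
    split_ifs
    · exact (Real.norm_eq_abs c).le.trans (le_max_left _ _)
    · exact (Real.norm_eq_abs d).le.trans (le_max_right _ _)

lemma setIntegral_Ioo_stepAt {l r : ℝ} (hlt : l ≤ t) (htr : t ≤ r) :
    ∫ u in Ioo l r, stepAt t c d u = (t - l) * c + (r - t) * d := by
  have hintegrable {v w : ℝ} (hvw : v ≤ w) :
      IntervalIntegrable (stepAt t c d) volume v w :=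
    (intervalIntegrable_iff_integrableOn_Ioc_of_le hvw).mpr
      (integrableOn_stepAt measure_Ioc_lt_top.ne)
  have hleft : ∫ u in l..t, stepAt t c d u = ∫ _ in l..t, c :=
    intervalIntegral.integral_congr fun u hu => if_pos (by
      rw [uIcc_of_le hlt] at hu; exact hu.2)
  have hright : ∫ u in t..r, stepAt t c d u = ∫ _ in t..r, d :=
    intervalIntegral.integral_congr_ae (ae_of_all _ fun u hu => by
      rw [uIoc_of_le htr] at hu; exact if_neg (not_le.mpr hu.1))
  rw [← integral_Ioc_eq_integral_Ioo, ← intervalIntegral.integral_of_le (hlt.trans htr),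
    ← intervalIntegral.integral_add_adjacent_intervals (hintegrable hlt)
      (hintegrable htr), hleft, hright, intervalIntegral.integral_const,
    intervalIntegral.integral_const, smul_eq_mul, smul_eq_mul]

lemma setIntegral_Ioo_stepAt_add {t' c' d' l r : ℝ} (hlt : l ≤ t) (htr : t ≤ r) (hlt' : l ≤ t')
    (htr' : t' ≤ r) :
    ∫ u in Ioo l r, (stepAt t c d + stepAt t' c' d') u =
      (t - l) * c + (r - t) * d + ((t' - l) * c' + (r - t') * d') := by
  rw [integral_add' (integrableOn_stepAt measure_Ioo_lt_top.ne)
    (integrableOn_stepAt measure_Ioo_lt_top.ne), setIntegral_Ioo_stepAt hlt htr,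
    setIntegral_Ioo_stepAt hlt' htr']

lemma stepAt_add_stepAt_one_sub_ae_eq (c' d' : ℝ) :
    (fun u => stepAt t c d u + stepAt (1 - t) c' d' (1 - u)) =ᵐ[volume]
      stepAt t (c + d') (d + c') := by
  filter_upwards [Measure.ae_ne volume t] with u hu
  rw [stepAt_one_sub hu, stepAt_add]

end StepFunction

lemma VaR_congr_ae {μ : Measure Ω} {X Y : Ω → ℝ} (h : X =ᵐ[μ] Y) : VaR μ X = VaR μ Y := by
  funext s
  have hsets (x : ℝ) : μ {ω | X ω ≤ x} = μ {ω | Y ω ≤ x} :=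
    measure_congr (h.mono fun ω hω => show (X ω ≤ x) = (Y ω ≤ x) by rw [hω])
  simp only [VaR, hsets]

lemma ES_congr_ae {μ : Measure Ω} {X Y : Ω → ℝ} (h : X =ᵐ[μ] Y) (p : ℝ) :
    ES μ X p = ES μ Y p := by
  rw [ES, ES, VaR_congr_ae h]

section UniformTransform

variable {μ : Measure Ω} {U : Ω → ℝ} (hU : Measurable U)
  (hUd : μ.map U = volume.restrict (Ioo 0 1))
include hU hUd

lemma measure_preimage_of_map_eq_uniform {S : Set ℝ} (hS : MeasurableSet S) :
    μ (U ⁻¹' S) = volume (S ∩ Ioo 0 1) := by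
  rw [← Measure.map_apply hU hS, hUd, Measure.restrict_apply hS]

lemma integral_comp_of_map_eq_uniform {g : ℝ → ℝ}
    (hg : AEStronglyMeasurable g (volume.restrict (Ioo 0 1))) :
    ∫ ω, g (U ω) ∂μ = ∫ u in Ioo 0 1, g u := by
  rw [← integral_map hU.aemeasurable (hUd ▸ hg), hUd]

lemma comp_ae_eq_of_map_eq_uniform {g h : ℝ → ℝ} (hgh : g =ᵐ[volume.restrict (Ioo 0 1)] h) :
    (fun ω => g (U ω)) =ᵐ[μ] fun ω => h (U ω) :=
  ae_of_ae_map (p := fun u => g u = h u) hU.aemeasurable (hUd ▸ hgh)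

lemma VaR_comp_of_map_eq_uniform {g : ℝ → ℝ} (hg : Monotone g) {s : ℝ} (hs : s ∈ Ioo 0 1)
    (hgs : ContinuousWithinAt g (Iic s) s) :
    VaR μ (fun ω => g (U ω)) s = g s := by
  have hcdf (x : ℝ) : μ {ω | g (U ω) ≤ x} = volume ({u | g u ≤ x} ∩ Ioo 0 1) :=
    measure_preimage_of_map_eq_uniform hU hUd (hg.measurable measurableSet_Iic)
  have hfin (x : ℝ) : volume ({u | g u ≤ x} ∩ Ioo 0 1) ≠ ⊤ :=
    measure_ne_top_of_subset inter_subset_right measure_Ioo_lt_top.ne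
  refine IsLeast.csInf_eq ⟨?_, fun x hx => ?_⟩
  · calc s = (volume (Ioc 0 s)).toReal := by simp [hs.1.le]
      _ ≤ _ := by
        show _ ≤ (μ {ω | g (U ω) ≤ g s}).toReal
        rw [hcdf]
        exact ENNReal.toReal_mono (hfin _) (measure_mono fun u hu =>
          ⟨hg hu.2, hu.1, hu.2.trans_lt hs.2⟩)
  · by_contra! hxs
    obtain ⟨l, hls, hl⟩ := mem_nhdsLE_iff_exists_Ioc_subset.mp
      (hgs.eventually (lt_mem_nhds hxs))
    have hsub : {u | g u ≤ x} ∩ Ioo 0 1 ⊆ Ioc 0 l := fun u ⟨(hux : g u ≤ x), hu0, _⟩ => by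
      refine ⟨hu0, not_lt.mp fun hlu => ?_⟩
      rcases le_or_gt u s with hus | hsu
      · exact (hl ⟨hlu, hus⟩ : x < g u).not_ge hux
      · exact (hxs.trans_le (hg hsu.le)).not_ge hux
    have : (μ {ω | g (U ω) ≤ x}).toReal ≤ max l 0 := by
      rw [hcdf, ← ENNReal.toReal_ofReal', ← sub_zero l, ← Real.volume_Ioc]
      exact ENNReal.toReal_mono measure_Ioc_lt_top.ne (measure_mono hsub)
    exact (lt_of_le_of_lt (hx.trans this) (max_lt hls hs.1)).false

lemma ES_comp_of_map_eq_uniform {g : ℝ → ℝ} (hg : Monotone g)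
    (hlc : ∀ s, ContinuousWithinAt g (Iic s) s) {p : ℝ} (hp : 0 ≤ p) :
    ES μ (fun ω => g (U ω)) p = (1 - p)⁻¹ * ∫ s in Ioo p 1, g s := by
  rw [ES, setIntegral_congr_fun measurableSet_Ioo fun s hs =>
    VaR_comp_of_map_eq_uniform hU hUd hg ⟨hp.trans_lt hs.1, hs.2⟩ (hlc s)]

end UniformTransform

theorem stmt19_general (μ : Measure Ω)
    (p : ℝ) (hp0 : 0 < p) (hp2 : p ≤ 1/2)
    (a b y : ℝ) (hb : 0 ≤ b) (hab : b ≤ a)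
    (U : Ω → ℝ) (hU : Measurable U) (hUd : μ.map U = volume.restrict (Set.Ioo 0 1))
    (qX qY : ℝ → ℝ)
    (hqX : qX = fun u => if u ≤ p then -(1 - p) * a else p * a)
    (hqY : qY = fun u => if u ≤ 1 - p then -p * b + y else (1 - p) * b + y)
    (X1 Y1 Y2 : Ω → ℝ)
    (hX1 : X1 = fun ω => qX (U ω)) (hY1 : Y1 = fun ω => qY (U ω))
    (hY2 : Y2 = fun ω => qY (1 - U ω)) :
    (∫ ω, (X1 ω + Y1 ω) ∂μ) = y ∧ (∫ ω, (X1 ω + Y2 ω) ∂μ) = y ∧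
    ES μ (fun ω => X1 ω + Y1 ω) p = p * (a - b) + p * b / (1 - p) + y ∧
    ES μ (fun ω => X1 ω + Y2 ω) p = p * (a - b) + y := by
  have hp1 : p < 1 := by linarith
  have hp1' : 1 - p ≠ 0 := by linarith
  set g₁ := stepAt p (-(1 - p) * a) (p * a) + stepAt (1 - p) (-p * b + y) ((1 - p) * b + y)
  set g₂ := stepAt p (-(1 - p) * a + ((1 - p) * b + y)) (p * a + (-p * b + y))
  have hZ₁ : (fun ω => X1 ω + Y1 ω) = fun ω => g₁ (U ω) := by subst_vars; rfl
  have hZ₂ : (fun ω => X1 ω + Y2 ω) =ᵐ[μ] fun ω => g₂ (U ω) := by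
    subst_vars
    exact comp_ae_eq_of_map_eq_uniform hU hUd
      (ae_restrict_of_ae (stepAt_add_stepAt_one_sub_ae_eq _ _))
  have hg₁ : Monotone g₁ :=
    (stepAt_monotone (by nlinarith)).add (stepAt_monotone (by nlinarith))
  have hg₂ : Monotone g₂ := stepAt_monotone (by nlinarith)
  have hg₁lc (s : ℝ) : ContinuousWithinAt g₁ (Set.Iic s) s :=
    (continuousWithinAt_Iic_stepAt s).add (continuousWithinAt_Iic_stepAt s)
  refine ⟨?_, ?_, ?_, ?_⟩
  · rw [hZ₁, integral_comp_of_map_eq_uniform hU hUd hg₁.measurable.aestronglyMeasurable,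
      setIntegral_Ioo_stepAt_add hp0.le hp1.le (by linarith) (by linarith)]
    ring
  · rw [integral_congr_ae hZ₂,
      integral_comp_of_map_eq_uniform hU hUd hg₂.measurable.aestronglyMeasurable,
      setIntegral_Ioo_stepAt hp0.le hp1.le]
    ring
  · rw [hZ₁, ES_comp_of_map_eq_uniform hU hUd hg₁ hg₁lc hp0.le,
      setIntegral_Ioo_stepAt_add le_rfl hp1.le (by linarith) (by linarith)]
    field_simp
    ring
  · rw [ES_congr_ae hZ₂, ES_comp_of_map_eq_uniform hU hUd hg₂ continuousWithinAt_Iic_stepAt hp0.le,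
      setIntegral_Ioo_stepAt le_rfl hp1.le]
    field_simp
    ring

/-- explicit mean and `ES_p` computations for the two-point
constructions used in the proof of the main characterization theorem. -/
theorem stmt19 (μ : Measure Ω) [IsProbabilityMeasure μ]
    (p : ℝ) (hp0 : 0 < p) (hp2 : p ≤ 1/2)
    (a b y : ℝ) (hb : 0 ≤ b) (hab : b ≤ a)
    (U : Ω → ℝ) (hU : Measurable U) (hUd : μ.map U = volume.restrict (Set.Ioo 0 1))
    (qX qY : ℝ → ℝ)
    (hqX : qX = fun u => if u ≤ p then -(1 - p) * a else p * a)
    (hqY : qY = fun u => if u ≤ 1 - p then -p * b + y else (1 - p) * b + y)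
    (X1 Y1 Y2 : Ω → ℝ)
    (hX1 : X1 = fun ω => qX (U ω)) (hY1 : Y1 = fun ω => qY (U ω))
    (hY2 : Y2 = fun ω => qY (1 - U ω)) :
    (∫ ω, (X1 ω + Y1 ω) ∂μ) = y ∧ (∫ ω, (X1 ω + Y2 ω) ∂μ) = y ∧
    ES μ (fun ω => X1 ω + Y1 ω) p = p * (a - b) + p * b / (1 - p) + y ∧
    ES μ (fun ω => X1 ω + Y2 ω) p = p * (a - b) + y :=
  stmt19_general μ p hp0 hp2 a b y hb hab U hU hUd qX qY hqX hqY X1 Y1 Y2 hX1 hY1 hY2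
end
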